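/- For every function r with r(N) → ∞, the expected symmetric exponential linear complexity E_N^{lin-exp-sym} := 2^{-N} ∑_{S_N} 2^{L^sym(S_N)} satisfies E_N^{lin-exp-sym} ≥ (1 − c·4^{−r(N)}) · 2^{N/2 − r(N)} for some absolute constant c > 0, and the expected symmetric linear complexity satisfies E_N^{lin-sym} ≥ (1 − c·4^{−log N})(N/2 − log N), hence E_N^{lin-sym} ≥ N/2 − log N + o(1). -/

import Mathlib

/-- The `N`th linear complexity of a binary sequence: the least `L` such that the first
`N` terms satisfy a linear recurrence of order `L` over `F₂`. -/
noncomputable def nthLinComplexity (N : ℕ) (s : ℕ → ZMod 2) : ℕ :=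
  sInf {L | ∃ c : ℕ → ZMod 2,
    ∀ n : ℕ, n + L < N → s (n + L) = ∑ ℓ ∈ Finset.range L, c ℓ * s (n + ℓ)}

/-- Extension of a finite binary word to a sequence (by zeros). -/
def extSeq (N : ℕ) (v : Fin N → ZMod 2) : ℕ → ZMod 2 :=
  fun n => if h : n < N then v ⟨n, h⟩ else 0

/-- The `N`th symmetric linear complexity of a length-`N` binary word. -/
noncomputable def symLinComplexity (N : ℕ) (v : Fin N → ZMod 2) : ℕ :=
  min (nthLinComplexity N (extSeq N v))
      (nthLinComplexity N (fun n => extSeq N v (N - 1 - n)))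

/-! A word of linear complexity `L` is determined by its `L` feedback coefficients and its first
`L` terms, so at most `4 ^ L` words have complexity `L`, at most `4 ^ K` have complexity
below `K`, and (counting reversals too) at most `2 * 4 ^ K` have symmetric complexity below
`K`. Hence for every monotone nonnegative `f` the average of `f (L^sym)` is at least
`(1 - 2 * 4 ^ K / 2 ^ N) * f K`; the choice `K = ⌈N / 2 - x⌉` makes the loss at most
`8 * 4 ^ (-x)`, which gives all three bounds with `c = 8`. -/

open Finset

def SatisfiesLinRec (N L : ℕ) (c s : ℕ → ZMod 2) : Prop :=
  ∀ n, n + L < N → s (n + L) = ∑ ℓ ∈ range L, c ℓ * s (n + ℓ)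

section LinearComplexity

variable {N L : ℕ} {c c' s t : ℕ → ZMod 2}

lemma exists_satisfiesLinRec_nthLinComplexity (N : ℕ) (s : ℕ → ZMod 2) :
    ∃ c, SatisfiesLinRec N (nthLinComplexity N s) c s :=
  Nat.sInf_mem (s := {L | ∃ c, SatisfiesLinRec N L c s}) ⟨N, fun _ => 0, fun n hn => by omega⟩

lemma SatisfiesLinRec.congr (h : ∀ k < N, s k = t k) (hs : SatisfiesLinRec N L c s) :
    SatisfiesLinRec N L c t := by
  intro n hn
  rw [← h _ hn, hs n hn]
  exact sum_congr rfl fun ℓ hℓ => by rw [h _ (by grind)]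

lemma nthLinComplexity_congr (h : ∀ k < N, s k = t k) :
    nthLinComplexity N s = nthLinComplexity N t := by
  have h' : ∀ k < N, t k = s k := fun k hk => (h k hk).symm
  change sInf {L | ∃ c, SatisfiesLinRec N L c s} = sInf {L | ∃ c, SatisfiesLinRec N L c t}
  congr 1
  ext L
  exact ⟨fun ⟨c, hc⟩ => ⟨c, hc.congr h⟩, fun ⟨c, hc⟩ => ⟨c, hc.congr h'⟩⟩

lemma SatisfiesLinRec.eq_of_eq_initial (hs : SatisfiesLinRec N L c s)
    (ht : SatisfiesLinRec N L c' t) (hc : ∀ ℓ < L, c ℓ = c' ℓ) (h : ∀ k < L, s k = t k) :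
    ∀ k < N, s k = t k := by
  intro k
  induction k using Nat.strong_induction_on with
  | _ k ih =>
    intro hk
    rcases lt_or_ge k L with hkL | hLk
    · exact h k hkL
    obtain ⟨n, rfl⟩ := Nat.exists_eq_add_of_le' hLk
    rw [hs n hk, ht n hk]
    exact sum_congr rfl fun ℓ hℓ => by rw [hc ℓ (by grind), ih (n + ℓ) (by grind) (by grind)]

end LinearComplexity

lemma card_nthLinComplexity_eq_le (N L : ℕ) :
    #{v : Fin N → ZMod 2 | nthLinComplexity N (extSeq N v) = L} ≤ 4 ^ L := by
  choose c hc using fun v : Fin N → ZMod 2 =>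
    exists_satisfiesLinRec_nthLinComplexity N (extSeq N v)
  calc #{v : Fin N → ZMod 2 | nthLinComplexity N (extSeq N v) = L}
      ≤ Fintype.card ((Fin L → ZMod 2) × (Fin L → ZMod 2)) := by
        refine card_le_card_of_injOn (fun v => (fun i => c v i, fun i => extSeq N v i))
          (fun _ _ => mem_coe.2 (mem_univ _)) ?_
        intro v hv w hw hvw
        simp only [coe_filter, mem_univ, true_and] at hv hw
        simp only [Prod.mk.injEq, funext_iff] at hvw
        have := (hv ▸ hc v).eq_of_eq_initial (hw ▸ hc w) (fun ℓ hℓ => hvw.1 ⟨ℓ, hℓ⟩)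
          fun k hk => hvw.2 ⟨k, hk⟩
        funext i
        simpa [extSeq] using this i i.2
    _ = 4 ^ L := by simp [← mul_pow]

lemma card_nthLinComplexity_lt_le (N K : ℕ) :
    #{v : Fin N → ZMod 2 | nthLinComplexity N (extSeq N v) < K} ≤ 4 ^ K := by
  set S := ({v | nthLinComplexity N (extSeq N v) < K} : Finset (Fin N → ZMod 2))
  calc #S = ∑ L ∈ range K, #{v ∈ S | nthLinComplexity N (extSeq N v) = L} :=
        card_eq_sum_card_fiberwise fun v hv => by simpa [S] using hv
    _ ≤ ∑ L ∈ range K, 4 ^ L := sum_le_sum fun L _ =>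
        (card_le_card (filter_subset_filter _ (subset_univ S))).trans
          (card_nthLinComplexity_eq_le N L)
    _ ≤ 4 ^ K := (Nat.geomSum_lt (by norm_num) fun _ => mem_range.1).le

lemma nthLinComplexity_reverse (N : ℕ) (v : Fin N → ZMod 2) :
    nthLinComplexity N (fun n => extSeq N v (N - 1 - n)) =
      nthLinComplexity N (extSeq N (v ∘ Fin.rev)) :=
  nthLinComplexity_congr fun k hk => by
    simp only [extSeq, hk, Function.comp_apply, Fin.rev, dif_pos, show N - 1 - k < N by omega]
    congr 2
    omega

lemma card_nthLinComplexity_reverse_lt (N K : ℕ) :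
    #{v : Fin N → ZMod 2 | nthLinComplexity N (fun n => extSeq N v (N - 1 - n)) < K} =
      #{v : Fin N → ZMod 2 | nthLinComplexity N (extSeq N v) < K} := by
  have hrev : ∀ v : Fin N → ZMod 2, v ∘ Fin.rev ∘ Fin.rev = v := fun v => by
    rw [Fin.rev_involutive.comp_self, Function.comp_id]
  refine card_nbij' (· ∘ Fin.rev) (· ∘ Fin.rev) (fun v hv => ?_) (fun v hv => ?_)
    (fun v _ => hrev v) (fun v _ => hrev v)
  · simpa [nthLinComplexity_reverse] using hv
  · simpa [nthLinComplexity_reverse, Function.comp_assoc, hrev] using hv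

lemma card_symLinComplexity_lt_le (N K : ℕ) :
    #{v : Fin N → ZMod 2 | symLinComplexity N v < K} ≤ 2 * 4 ^ K := by
  simp only [symLinComplexity, min_lt_iff, filter_or]
  grw [card_union_le, card_nthLinComplexity_reverse_lt, card_nthLinComplexity_lt_le]
  omega

lemma two_pow_le_card_le_symLinComplexity_add (N K : ℕ) :
    2 ^ N ≤ #{v : Fin N → ZMod 2 | K ≤ symLinComplexity N v} + 2 * 4 ^ K := by
  have := card_filter_add_card_filter_not (s := (univ : Finset (Fin N → ZMod 2)))
    (fun v => K ≤ symLinComplexity N v)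
  simp only [not_le, card_univ, Fintype.card_fun, Fintype.card_fin, ZMod.card] at this
  grw [← card_symLinComplexity_lt_le N K]
  omega

noncomputable def expectSymLin (f : ℕ → ℝ) (N : ℕ) : ℝ :=
  (2 : ℝ) ^ (-(N : ℤ)) * ∑ v : Fin N → ZMod 2, f (symLinComplexity N v)

section Expectation

variable {f : ℕ → ℝ}

lemma expectSymLin_eq_div (N : ℕ) :
    expectSymLin f N = (∑ v : Fin N → ZMod 2, f (symLinComplexity N v)) / 2 ^ N := by
  rw [expectSymLin, zpow_neg, zpow_natCast, inv_mul_eq_div]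

lemma apply_zero_le_expectSymLin (hf : Monotone f) (N : ℕ) : f 0 ≤ expectSymLin f N := by
  rw [expectSymLin_eq_div, le_div_iff₀ (by positivity)]
  calc f 0 * 2 ^ N = #(univ : Finset (Fin N → ZMod 2)) • f 0 := by simp [mul_comm]
    _ ≤ _ := card_nsmul_le_sum _ _ _ fun v _ => hf (Nat.zero_le _)

lemma one_sub_mul_le_expectSymLin (hf : Monotone f) (hf0 : 0 ≤ f 0) (N K : ℕ) :
    (1 - 2 * 4 ^ K / 2 ^ N) * f K ≤ expectSymLin f N := by
  set S := ({v | K ≤ symLinComplexity N v} : Finset (Fin N → ZMod 2))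
  have hcard : (2 : ℝ) ^ N - 2 * 4 ^ K ≤ #S := by
    have := two_pow_le_card_le_symLinComplexity_add N K
    rw [sub_le_iff_le_add]
    exact_mod_cast this
  have hsum : #S • f K ≤ ∑ v : Fin N → ZMod 2, f (symLinComplexity N v) :=
    (card_nsmul_le_sum S _ _ fun v hv => hf (mem_filter.1 hv).2).trans <|
      sum_le_sum_of_subset_of_nonneg (subset_univ S) fun v _ _ => hf0.trans (hf (Nat.zero_le _))
  rw [expectSymLin_eq_div, le_div_iff₀ (by positivity), one_sub_div (by positivity),
    div_mul_eq_mul_div, div_mul_cancel₀ _ (by positivity)]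
  rw [nsmul_eq_mul] at hsum
  exact (mul_le_mul_of_nonneg_right hcard (hf0.trans (hf (Nat.zero_le K)))).trans hsum

lemma four_rpow (y : ℝ) : (4 : ℝ) ^ y = ((2 : ℝ) ^ y) ^ 2 := by
  rw [← Real.rpow_mul_natCast (by norm_num), mul_comm, Real.rpow_natCast_mul (by norm_num)]
  norm_num

lemma le_expectSymLin_of_le_ceil (hf : Monotone f) (hf0 : 0 ≤ f 0) (N : ℕ) {x a : ℝ}
    (hx : x ≤ N / 2) (ha0 : 0 ≤ a) (ha : a ≤ f ⌈N / 2 - x⌉₊) :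
    (1 - 8 * (4 : ℝ) ^ (-x)) * a ≤ expectSymLin f N := by
  set K := ⌈N / 2 - x⌉₊
  have hK : (4 : ℝ) ^ K ≤ 4 * 2 ^ N * 4 ^ (-x) :=
    calc (4 : ℝ) ^ K = 4 ^ (K : ℝ) := (Real.rpow_natCast _ _).symm
      _ ≤ 4 ^ ((N / 2 - x) + 1) := Real.rpow_le_rpow_of_exponent_le (by norm_num)
          (Nat.ceil_lt_add_one (by linarith)).le
      _ = 4 * 2 ^ N * 4 ^ (-x) := by
        rw [Real.rpow_add (by norm_num), sub_eq_add_neg, Real.rpow_add (by norm_num),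
          four_rpow (N / 2), ← Real.rpow_mul_natCast (by norm_num)]
        norm_num
        ring
  have hδ : 1 - 8 * (4 : ℝ) ^ (-x) ≤ 1 - 2 * 4 ^ K / 2 ^ N := by
    rw [sub_le_sub_iff_left, div_le_iff₀ (by positivity)]
    linarith
  rcases le_or_gt (1 - 8 * (4 : ℝ) ^ (-x)) 0 with hneg | hpos
  · exact (mul_nonpos_of_nonpos_of_nonneg hneg ha0).trans
      (hf0.trans (apply_zero_le_expectSymLin hf N))
  · exact (mul_le_mul hδ ha ha0 (hpos.le.trans hδ)).trans (one_sub_mul_le_expectSymLin hf hf0 N K)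

end Expectation

lemma expectSymLin_two_pow_ge (N : ℕ) (x : ℝ) :
    (1 - 8 * (4 : ℝ) ^ (-x)) * (2 : ℝ) ^ ((N : ℝ) / 2 - x) ≤
      expectSymLin (fun L => (2 : ℝ) ^ L) N := by
  have hf : Monotone fun L : ℕ => (2 : ℝ) ^ L := pow_right_mono₀ one_le_two
  rcases le_or_gt x (N / 2) with hx | hx
  · refine le_expectSymLin_of_le_ceil hf (by norm_num) N hx (by positivity) ?_
    rw [← Real.rpow_natCast]
    exact Real.rpow_le_rpow_of_exponent_le one_le_two (Nat.le_ceil _)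
  · have h4 : 0 < (4 : ℝ) ^ (-x) := by positivity
    have h2 : 0 < (2 : ℝ) ^ ((N : ℝ) / 2 - x) := by positivity
    have h2' : (2 : ℝ) ^ ((N : ℝ) / 2 - x) < 1 :=
      Real.rpow_lt_one_of_one_lt_of_neg one_lt_two (by linarith)
    calc (1 - 8 * (4 : ℝ) ^ (-x)) * (2 : ℝ) ^ ((N : ℝ) / 2 - x) ≤ 1 := by
          nlinarith [mul_pos h4 h2]
      _ ≤ expectSymLin (fun L => (2 : ℝ) ^ L) N := by
          simpa using apply_zero_le_expectSymLin hf N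

lemma four_rpow_neg_logb {n : ℝ} (hn : 0 < n) : (4 : ℝ) ^ (-Real.logb 2 n) = (n ^ 2)⁻¹ := by
  rw [Real.rpow_neg (by norm_num), four_rpow, Real.rpow_logb (by norm_num) (by norm_num) hn]

lemma logb_le_half_of_le_two {N : ℕ} (hN : N ≤ 2) : Real.logb 2 N ≤ N / 2 := by
  interval_cases N <;> norm_num

lemma expectSymLin_natCast_ge (N : ℕ) :
    (1 - 8 * (4 : ℝ) ^ (-Real.logb 2 N)) * ((N : ℝ) / 2 - Real.logb 2 N) ≤
      expectSymLin (fun L => (L : ℝ)) N := by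
  have hf : Monotone fun L : ℕ => (L : ℝ) := Nat.mono_cast
  rcases le_or_gt (Real.logb 2 N) (N / 2) with hx | hx
  · exact le_expectSymLin_of_le_ceil hf (by simp) N hx (by linarith) (Nat.le_ceil _)
  · have hN : (3 : ℝ) ≤ N := by
      by_contra! h
      exact hx.not_ge (logb_le_half_of_le_two (Nat.lt_succ_iff.1 (by exact_mod_cast h)))
    have hδ : 0 ≤ 1 - 8 * (4 : ℝ) ^ (-Real.logb 2 N) := by
      rw [four_rpow_neg_logb (by linarith), sub_nonneg, ← div_eq_mul_inv, div_le_one (by positivity)]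
      nlinarith
    exact (mul_nonpos_of_nonneg_of_nonpos hδ (by linarith)).trans
      (by simpa using apply_zero_le_expectSymLin hf N)

lemma expectSymLin_natCast_ge_sub (N : ℕ) :
    (N : ℝ) / 2 - Real.logb 2 N - 4 / N ≤ expectSymLin (fun L => (L : ℝ)) N := by
  rcases N.eq_zero_or_pos with rfl | hN
  · simpa using apply_zero_le_expectSymLin (f := fun L => (L : ℝ)) Nat.mono_cast 0
  have hN' : (0 : ℝ) < N := by exact_mod_cast hN
  have hlog : 0 ≤ Real.logb 2 N := Real.logb_nonneg one_lt_two (by exact_mod_cast hN)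
  calc (N : ℝ) / 2 - Real.logb 2 N - 4 / N
      ≤ (1 - 8 * (4 : ℝ) ^ (-Real.logb 2 N)) * ((N : ℝ) / 2 - Real.logb 2 N) := by
        rw [four_rpow_neg_logb hN']
        have : 0 ≤ 8 * Real.logb 2 N / N ^ 2 := by positivity
        field_simp
        nlinarith
    _ ≤ _ := expectSymLin_natCast_ge N

theorem stmt17 :
    ∃ c : ℝ, 0 < c ∧
      (∀ r : ℕ → ℝ, Filter.Tendsto r Filter.atTop Filter.atTop →
        ∀ N : ℕ,
          (1 - c * (4 : ℝ) ^ (-r N)) * (2 : ℝ) ^ ((N : ℝ) / 2 - r N) ≤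
            (2 : ℝ) ^ (-(N : ℤ)) *
              ∑ v : Fin N → ZMod 2, (2 : ℝ) ^ (symLinComplexity N v)) ∧
      (∀ N : ℕ,
        (1 - c * (4 : ℝ) ^ (-(Real.logb 2 N))) * ((N : ℝ) / 2 - Real.logb 2 N) ≤
          (2 : ℝ) ^ (-(N : ℤ)) *
            ∑ v : Fin N → ZMod 2, (symLinComplexity N v : ℝ)) ∧
      (∃ ε : ℕ → ℝ, Filter.Tendsto ε Filter.atTop (nhds 0) ∧
        ∀ N : ℕ,
          (N : ℝ) / 2 - Real.logb 2 N + ε N ≤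
            (2 : ℝ) ^ (-(N : ℤ)) *
              ∑ v : Fin N → ZMod 2, (symLinComplexity N v : ℝ)) :=
  ⟨8, by norm_num, fun r _ N => expectSymLin_two_pow_ge N (r N), expectSymLin_natCast_ge,
    fun N => -(4 / N), by simpa using (tendsto_const_div_atTop_nhds_zero_nat (4 : ℝ)).neg,
    fun N => sub_eq_add_neg _ (4 / (N : ℝ)) ▸ expectSymLin_natCast_ge_sub N⟩
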